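/- Let C be a nonempty (n,d,w) constant-weight code with d even and d < 2w ≤ n, with distance distribution {A_{2i}}, and let H = {d/2, …, w}. Suppose H1 ⊆ H with |H1| ≥ 2 is such that m_{i,j} < d for all i ≠ j in H1, and for each i ∈ H1 let P_i be an integer with P_i ≥ T(i,w,i,n−w,d). Then Σ_{i ∈ H1} A_{2i}/P_i ≤ 1. -/

import Mathlib

/-- The number of ones of a binary vector. -/
def wtOnes {n : ℕ} (u : Fin n → ZMod 2) : ℕ :=
  (Finset.univ.filter (fun t => u t = 1)).card

/-- `C` is an `(n,d,w)` constant-weight binary code. -/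
def IsCWCode (n d w : ℕ) (C : Finset (Fin n → ZMod 2)) : Prop :=
  (∀ c ∈ C, wtOnes c = w) ∧
  ∀ u ∈ C, ∀ v ∈ C, u ≠ v → d ≤ hammingDist u v

/-- `A n d w`: the largest possible size of an `(n,d,w)` constant-weight code. -/
noncomputable def A (n d w : ℕ) : ℕ :=
  sSup {M | ∃ C : Finset (Fin n → ZMod 2), IsCWCode n d w C ∧ C.card = M}

/-- `C` is a `(w1,n1,w2,n2,d)` doubly-constant-weight binary code. -/
def IsDCWCode (w1 n1 w2 n2 d : ℕ) (C : Finset (Fin n1 ⊕ Fin n2 → ZMod 2)) : Prop :=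
  (∀ c ∈ C,
    (Finset.univ.filter (fun t : Fin n1 => c (Sum.inl t) = 1)).card = w1 ∧
    (Finset.univ.filter (fun t : Fin n2 => c (Sum.inr t) = 1)).card = w2) ∧
  ∀ u ∈ C, ∀ v ∈ C, u ≠ v → d ≤ hammingDist u v

/-- `T w1 n1 w2 n2 d`: the largest possible size of a `(w1,n1,w2,n2,d)`
doubly-constant-weight code. -/
noncomputable def T (w1 n1 w2 n2 d : ℕ) : ℕ :=
  sSup {M | ∃ C : Finset (Fin n1 ⊕ Fin n2 → ZMod 2), IsDCWCode w1 n1 w2 n2 d C ∧ C.card = M}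

/-- `S_i(c)`: the set of codewords of `C` at distance `i` from `c`. -/
def Sdist {n : ℕ} (C : Finset (Fin n → ZMod 2)) (c : Fin n → ZMod 2) (i : ℕ) :
    Finset (Fin n → ZMod 2) :=
  C.filter (fun u => hammingDist u c = i)

/-- The distance distribution `A_i = (1/|C|) ∑_{c ∈ C} |S_i(c)|` of a code `C`. -/
noncomputable def distDistr {n : ℕ} (C : Finset (Fin n → ZMod 2)) (i : ℕ) : ℚ :=
  (∑ c ∈ C, ((Sdist C c i).card : ℚ)) / (C.card : ℚ)

/-- `V_i`: vectors of `F^n` with exactly `i` ones on the first `w` coordinates and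
exactly `i` ones on the last `n - w` coordinates. -/
def Vset (n w i : ℕ) : Finset (Fin n → ZMod 2) :=
  Finset.univ.filter (fun u =>
    (Finset.univ.filter (fun t : Fin n => t.val < w ∧ u t = 1)).card = i ∧
    (Finset.univ.filter (fun t : Fin n => w ≤ t.val ∧ u t = 1)).card = i)

/-- `m_{i,j} = max { d(u,v) : u ∈ V_i, v ∈ V_j }`. -/
def mMax (n w i j : ℕ) : ℕ :=
  ((Vset n w i) ×ˢ (Vset n w j)).sup fun p => hammingDist p.1 p.2

/-- `P⁻_k(n;x) = ∑_{j odd} C(x,j) C(n-x,k-j)`. -/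
def Pminus (k n x : ℕ) : ℕ :=
  ∑ j ∈ Finset.range (k + 1), if Odd j then x.choose j * (n - x).choose (k - j) else 0

/-- `P⁺_k(n;x) = ∑_{j even} C(x,j) C(n-x,k-j)`. -/
def Pplus (k n x : ℕ) : ℕ :=
  ∑ j ∈ Finset.range (k + 1), if Even j then x.choose j * (n - x).choose (k - j) else 0

/-- The Krawtchouk polynomial `P_k(n;x) = ∑_j (-1)^j C(x,j) C(n-x,k-j)` at integer points. -/
def Kraw (k n x : ℕ) : ℤ :=
  ∑ j ∈ Finset.range (k + 1), (-1 : ℤ) ^ j * x.choose j * (n - x).choose (k - j)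

/-!
Fix a codeword `c`. Adding `c` and permuting coordinates so that the support of `c` comes first
is an isometry of `F^n`, and it maps every codeword at distance `2i` from `c` into `V_i`, since
such a codeword differs from `c` in exactly `i` positions inside and `i` positions outside the
support of `c`. Hence `S_{2i}(c)` is, up to isometry, a doubly-constant-weight code, so
`|S_{2i}(c)| ≤ T(i,w,i,n-w,d) ≤ P_i`; and for `i ≠ j` in `H1` two codewords in `S_{2i}(c)` and
`S_{2j}(c)` would be at distance at most `m_{i,j} < d`, so at most one of these spheres is
nonempty. Thus `∑_{i ∈ H1} |S_{2i}(c)| / P_i ≤ 1` for every `c`, and averaging over `c` gives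
the bound.
-/
open Finset

lemma hammingDist_comp_equiv {ι κ β : Type*} [Fintype ι] [Fintype κ] [DecidableEq β]
    (e : ι ≃ κ) (u v : κ → β) : hammingDist (u ∘ e) (v ∘ e) = hammingDist u v :=
  card_equiv e (by simp)

lemma hammingDist_add_right {ι β : Type*} [Fintype ι] [DecidableEq β] [Add β]
    [IsRightCancelAdd β] (u v c : ι → β) : hammingDist (u + c) (v + c) = hammingDist u v := by
  simp [hammingDist]

lemma ZMod.two_add_eq_one_iff_ne : ∀ x y : ZMod 2, x + y = 1 ↔ x ≠ y := by decide

lemma card_filter_eq_one_and_ne {n i : ℕ} {u c : Fin n → ZMod 2} (hw : wtOnes u = wtOnes c)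
    (hdist : hammingDist u c = 2 * i) :
    #{t | c t = 1 ∧ u t ≠ c t} = i ∧ #{t | ¬ c t = 1 ∧ u t ≠ c t} = i := by
  set X : Finset (Fin n) := {t | u t = 1}
  set Y : Finset (Fin n) := {t | c t = 1}
  have hin : ∀ x y : ZMod 2, y = 1 ∧ x ≠ y ↔ y = 1 ∧ ¬ x = 1 := by decide
  have hout : ∀ x y : ZMod 2, ¬ y = 1 ∧ x ≠ y ↔ x = 1 ∧ ¬ y = 1 := by decide
  have hne : ∀ x y : ZMod 2, x ≠ y ↔ y = 1 ∧ ¬ x = 1 ∨ x = 1 ∧ ¬ y = 1 := by decide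
  have hYX : #{t | c t = 1 ∧ u t ≠ c t} = #(Y \ X) := by
    congr 1; ext t; simp [X, Y, hin (u t) (c t)]
  have hXY : #{t | ¬ c t = 1 ∧ u t ≠ c t} = #(X \ Y) := by
    congr 1; ext t; simp [X, Y, hout (u t) (c t)]
  have hsum : #(Y \ X) + #(X \ Y) = 2 * i := by
    rw [← card_union_of_disjoint disjoint_sdiff_sdiff, ← hdist, hammingDist]
    congr 1; ext t; simp [X, Y, hne (u t) (c t)]
  have hY := card_sdiff_add_card_inter Y X
  have hX := card_sdiff_add_card_inter X Y
  rw [inter_comm] at hX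
  change #X = #Y at hw
  omega

lemma exists_perm_lt_wtOnes_iff {n : ℕ} (c : Fin n → ZMod 2) :
    ∃ e : Equiv.Perm (Fin n), ∀ t : Fin n, (t : ℕ) < wtOnes c ↔ c (e t) = 1 := by
  have hcard :
      Fintype.card {t : Fin n // (t : ℕ) < wtOnes c} = Fintype.card {t // c t = 1} := by
    rw [Fintype.card_fin_lt_of_le, Fintype.card_subtype, wtOnes]
    simpa [wtOnes] using card_le_univ (α := Fin n) {t | c t = 1}
  have hcard' :
      Fintype.card {t : Fin n // ¬ (t : ℕ) < wtOnes c} = Fintype.card {t // ¬ c t = 1} := by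
    rw [Fintype.card_subtype_compl, Fintype.card_subtype_compl, hcard]
  refine ⟨(Fintype.equivOfCardEq hcard).subtypeCongr (Fintype.equivOfCardEq hcard'),
    fun t => ?_⟩
  by_cases ht : (t : ℕ) < wtOnes c
  · simpa [Equiv.subtypeCongr, ht] using (Fintype.equivOfCardEq hcard ⟨t, ht⟩).2
  · simpa [Equiv.subtypeCongr, ht] using (Fintype.equivOfCardEq hcard' ⟨t, ht⟩).2

lemma add_comp_perm_mem_Vset {n w i : ℕ} {u c : Fin n → ZMod 2} {e : Equiv.Perm (Fin n)}
    (he : ∀ t : Fin n, (t : ℕ) < w ↔ c (e t) = 1) (hw : wtOnes u = wtOnes c)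
    (hdist : hammingDist u c = 2 * i) : (u + c) ∘ e ∈ Vset n w i := by
  obtain ⟨hin, hout⟩ := card_filter_eq_one_and_ne hw hdist
  simp only [Vset, mem_filter, mem_univ, true_and]
  constructor
  · rw [← hin]
    exact card_equiv e (by simp [he, ZMod.two_add_eq_one_iff_ne])
  · rw [← hout]
    exact card_equiv e (by simp [← he, ZMod.two_add_eq_one_iff_ne])

lemma hammingDist_le_mMax {n w i j : ℕ} {u v : Fin n → ZMod 2} (hu : u ∈ Vset n w i)
    (hv : v ∈ Vset n w j) : hammingDist u v ≤ mMax n w i j :=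
  le_sup (f := fun p : (Fin n → ZMod 2) × (Fin n → ZMod 2) => hammingDist p.1 p.2)
    (mk_mem_product hu hv)

lemma card_le_T {w1 n1 w2 n2 d : ℕ} {D : Finset (Fin n1 ⊕ Fin n2 → ZMod 2)}
    (hD : IsDCWCode w1 n1 w2 n2 d D) : #D ≤ T w1 n1 w2 n2 d :=
  le_csSup ⟨Fintype.card (Fin n1 ⊕ Fin n2 → ZMod 2), fun _ ⟨D', _, hD'⟩ => hD' ▸ card_le_univ D'⟩
    ⟨D, hD, rfl⟩

def finSumFinSubEquiv {n w : ℕ} (hwn : w ≤ n) : Fin w ⊕ Fin (n - w) ≃ Fin n :=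
  finSumFinEquiv.trans (finCongr (Nat.add_sub_cancel' hwn))

@[simp]
lemma finSumFinSubEquiv_inl_val {n w : ℕ} (hwn : w ≤ n) (a : Fin w) :
    (finSumFinSubEquiv hwn (Sum.inl a) : ℕ) = a := by
  simp [finSumFinSubEquiv]

@[simp]
lemma finSumFinSubEquiv_inr_val {n w : ℕ} (hwn : w ≤ n) (b : Fin (n - w)) :
    (finSumFinSubEquiv hwn (Sum.inr b) : ℕ) = w + b := by
  simp [finSumFinSubEquiv]

lemma card_filter_finSumFinSubEquiv_inl {n w : ℕ} (hwn : w ≤ n) (p : Fin n → Prop)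
    [DecidablePred p] :
    #{a | p (finSumFinSubEquiv hwn (Sum.inl a))} = #{t : Fin n | t < w ∧ p t} := by
  refine card_nbij (fun a => finSumFinSubEquiv hwn (Sum.inl a)) (fun a => by simp) ?_ ?_
  · intro a _ b _ h; simpa using h
  · intro t ht
    obtain ⟨htw, hpt⟩ : (t : ℕ) < w ∧ p t := by simpa using ht
    have h : finSumFinSubEquiv hwn (Sum.inl ⟨t, htw⟩) = t := by ext; simp
    exact ⟨_, by simpa [h] using hpt, h⟩

lemma card_filter_finSumFinSubEquiv_inr {n w : ℕ} (hwn : w ≤ n) (p : Fin n → Prop)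
    [DecidablePred p] :
    #{b | p (finSumFinSubEquiv hwn (Sum.inr b))} = #{t : Fin n | w ≤ t ∧ p t} := by
  refine card_nbij (fun b => finSumFinSubEquiv hwn (Sum.inr b)) (fun b => by simp) ?_ ?_
  · intro a _ b _ h; simpa using h
  · intro t ht
    obtain ⟨hwt, hpt⟩ : w ≤ (t : ℕ) ∧ p t := by simpa using ht
    have h : finSumFinSubEquiv hwn (Sum.inr ⟨t - w, by omega⟩) = t := by ext; simp; omega
    exact ⟨_, by simpa [h] using hpt, h⟩

lemma card_le_T_of_subset_Vset {n w i d : ℕ} (hwn : w ≤ n) {D : Finset (Fin n → ZMod 2)}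
    (hDV : D ⊆ Vset n w i) (hD : ∀ u ∈ D, ∀ v ∈ D, u ≠ v → d ≤ hammingDist u v) :
    #D ≤ T i w i (n - w) d := by
  have hinj : Function.Injective fun x : Fin n → ZMod 2 => x ∘ finSumFinSubEquiv hwn :=
    (finSumFinSubEquiv hwn).surjective.injective_comp_right
  rw [← card_image_of_injective D hinj]
  refine card_le_T ⟨fun y hy => ?_, fun y hy z hz hyz => ?_⟩
  · obtain ⟨x, hx, rfl⟩ := mem_image.mp hy
    obtain ⟨-, hin, hout⟩ := mem_filter.mp (hDV hx)
    exact ⟨(card_filter_finSumFinSubEquiv_inl hwn _).trans hin,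
      (card_filter_finSumFinSubEquiv_inr hwn _).trans hout⟩
  · obtain ⟨x, hx, rfl⟩ := mem_image.mp hy
    obtain ⟨x', hx', rfl⟩ := mem_image.mp hz
    rw [hammingDist_comp_equiv]
    exact hD x hx x' hx' fun h => hyz (by rw [h])

namespace IsCWCode

variable {n d w : ℕ} {C : Finset (Fin n → ZMod 2)} {c : Fin n → ZMod 2}

lemma exists_isometry_mapsTo_Vset (hcode : IsCWCode n d w C) (hc : c ∈ C) :
    ∃ F : (Fin n → ZMod 2) → Fin n → ZMod 2, (∀ u v, hammingDist (F u) (F v) = hammingDist u v) ∧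
      ∀ i, ∀ u ∈ Sdist C c (2 * i), F u ∈ Vset n w i := by
  obtain ⟨e, he⟩ := exists_perm_lt_wtOnes_iff c
  rw [hcode.1 c hc] at he
  refine ⟨fun u => (u + c) ∘ e, fun u v => ?_, fun i u hu => ?_⟩
  · rw [hammingDist_comp_equiv, hammingDist_add_right]
  · obtain ⟨huC, hdist⟩ := mem_filter.mp hu
    exact add_comp_perm_mem_Vset he ((hcode.1 u huC).trans (hcode.1 c hc).symm) hdist

lemma card_Sdist_le_T (hcode : IsCWCode n d w C) (hc : c ∈ C) (i : ℕ) :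
    #(Sdist C c (2 * i)) ≤ T i w i (n - w) d := by
  obtain ⟨F, hF, hFV⟩ := hcode.exists_isometry_mapsTo_Vset hc
  have hwn : w ≤ n := hcode.1 c hc ▸ (card_le_univ _).trans (card_fin n).le
  have hinj : Function.Injective F := fun u v h => by
    rw [← hammingDist_eq_zero, ← hF, h, hammingDist_self]
  rw [← card_image_of_injective _ hinj]
  refine card_le_T_of_subset_Vset hwn (image_subset_iff.mpr (hFV i)) ?_
  simp only [mem_image]
  rintro _ ⟨u, hu, rfl⟩ _ ⟨v, hv, rfl⟩ huv
  rw [hF]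
  exact hcode.2 u (mem_filter.mp hu).1 v (mem_filter.mp hv).1 fun h => huv (h ▸ rfl)

lemma le_mMax_of_mem_Sdist (hcode : IsCWCode n d w C) (hc : c ∈ C) {i j : ℕ} (hij : i ≠ j)
    {u v : Fin n → ZMod 2} (hu : u ∈ Sdist C c (2 * i)) (hv : v ∈ Sdist C c (2 * j)) :
    d ≤ mMax n w i j := by
  obtain ⟨F, hF, hFV⟩ := hcode.exists_isometry_mapsTo_Vset hc
  obtain ⟨huC, hui⟩ := mem_filter.mp hu
  obtain ⟨hvC, hvj⟩ := mem_filter.mp hv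
  have huv : u ≠ v := by rintro rfl; omega
  calc d ≤ hammingDist u v := hcode.2 u huC v hvC huv
    _ = hammingDist (F u) (F v) := (hF u v).symm
    _ ≤ mMax n w i j := hammingDist_le_mMax (hFV i u hu) (hFV j v hv)

end IsCWCode

lemma sum_div_le_one_of_subsingleton_support {ι K : Type*} [Field K] [LinearOrder K]
    [IsStrictOrderedRing K] {s : Finset ι} {a b : ι → K} (ha : ∀ i ∈ s, 0 ≤ a i)
    (hab : ∀ i ∈ s, a i ≤ b i) (hsupp : ∀ i ∈ s, ∀ j ∈ s, a i ≠ 0 → a j ≠ 0 → i = j) :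
    ∑ i ∈ s, a i / b i ≤ 1 := by
  by_cases h : ∀ i ∈ s, a i = 0
  · rw [sum_eq_zero fun i hi => by rw [h i hi, zero_div]]
    exact zero_le_one
  · obtain ⟨i, hi, hai⟩ := not_forall₂.mp h
    rw [sum_eq_single_of_mem i hi fun j hj hji => by
      rw [not_not.mp fun haj => hji (hsupp j hj i hi haj hai), zero_div]]
    exact div_le_one_of_le₀ (hab i hi) ((ha i hi).trans (hab i hi))

lemma sum_distDistr_div_le_one {ι : Type*} {n : ℕ} {C : Finset (Fin n → ZMod 2)} {s : Finset ι}
    (k : ι → ℕ) (q : ι → ℚ) (h : ∀ c ∈ C, ∑ i ∈ s, (#(Sdist C c (k i)) : ℚ) / q i ≤ 1) :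
    ∑ i ∈ s, distDistr C (k i) / q i ≤ 1 := by
  calc ∑ i ∈ s, distDistr C (k i) / q i
      = (∑ c ∈ C, ∑ i ∈ s, (#(Sdist C c (k i)) : ℚ) / q i) / #C := by
        simp only [distDistr, div_right_comm _ (#C : ℚ), sum_div]
        rw [sum_comm]
    _ ≤ 1 := by
        refine div_le_one_of_le₀ ?_ (Nat.cast_nonneg _)
        simpa using sum_le_card_nsmul C _ 1 h

theorem distDistr_subset_bound_general (n d w : ℕ) (C : Finset (Fin n → ZMod 2))
    (hcode : IsCWCode n d w C)
    (H1 : Finset ℕ)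
    (hm : ∀ i ∈ H1, ∀ j ∈ H1, i ≠ j → mMax n w i j < d)
    (P : ℕ → ℤ) (hP : ∀ i ∈ H1, (T i w i (n - w) d : ℤ) ≤ P i) :
    ∑ i ∈ H1, distDistr C (2 * i) / (P i : ℚ) ≤ 1 := by
  refine sum_distDistr_div_le_one (2 * ·) _ fun c hc => ?_
  refine sum_div_le_one_of_subsingleton_support (fun _ _ => Nat.cast_nonneg _) (fun i hi => ?_) ?_
  · exact_mod_cast (Nat.cast_le.mpr (hcode.card_Sdist_le_T hc i)).trans (hP i hi)
  · intro i hi j hj hSi hSj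
    obtain ⟨u, hu⟩ := card_ne_zero.mp (by exact_mod_cast hSi)
    obtain ⟨v, hv⟩ := card_ne_zero.mp (by exact_mod_cast hSj)
    by_contra hij
    exact (hm i hi j hj hij).not_ge (hcode.le_mMax_of_mem_Sdist hc hij hu hv)

/-- For a nonempty `(n,d,w)` constant-weight code `C` (`d` even,
`d < 2w ≤ n`) with distance distribution `{A_{2i}}`, a subset `H1 ⊆ H` with
`|H1| ≥ 2` and `m_{i,j} < d` for all `i ≠ j` in `H1`, and integers
`P_i ≥ T(i,w,i,n-w,d)` for `i ∈ H1`, one has `∑_{i ∈ H1} A_{2i}/P_i ≤ 1`. -/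
theorem distDistr_subset_bound (n d w : ℕ) (C : Finset (Fin n → ZMod 2)) (hC : C.Nonempty)
    (hcode : IsCWCode n d w C) (hd : Even d) (hdw : d < 2 * w) (hwn : 2 * w ≤ n)
    (H1 : Finset ℕ) (hH1 : H1 ⊆ Finset.Icc (d / 2) w) (hcard : 2 ≤ H1.card)
    (hm : ∀ i ∈ H1, ∀ j ∈ H1, i ≠ j → mMax n w i j < d)
    (P : ℕ → ℤ) (hP : ∀ i ∈ H1, (T i w i (n - w) d : ℤ) ≤ P i) :
    ∑ i ∈ H1, distDistr C (2 * i) / (P i : ℚ) ≤ 1 :=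
  distDistr_subset_bound_general n d w C hcode H1 hm P hP
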